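/- arXiv:0905.4141 — 4 statements merged into one kernel-verified Lean document; each statement's English description precedes it below -/
import Mathlib

section
/- For all integers g ≥ 0 and n ≥ 1 with 2g−2+n > 0 and all nonnegative integers b₁,…,bₙ: if p denotes the number of indices i with bᵢ = 0, and 0 < b₁+⋯+bₙ ≤ 4g−4+2(n−p), then N_{g,n}(b₁,…,bₙ) = 0. -/
open Finset

/-- The lattice point count functions `N g n : (Fin n → ℕ) → ℚ` of Norbury,
axiomatized by symmetry, vanishing for odd total sum, vanishing in the unstable
range `2g - 2 + n ≤ 0`, the base cases `N_{0,3}` and `N_{1,1}`, and the main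
recursion. -/
structure LatticeCount (N : (g : ℕ) → (n : ℕ) → (Fin n → ℕ) → ℚ) : Prop where
  symm : ∀ (g n : ℕ) (σ : Equiv.Perm (Fin n)) (b : Fin n → ℕ),
    N g n (b ∘ σ) = N g n b
  odd_vanish : ∀ (g n : ℕ) (b : Fin n → ℕ), Odd (∑ i, b i) → N g n b = 0
  unstable : ∀ (g n : ℕ) (b : Fin n → ℕ), 2 * (g : ℤ) - 2 + (n : ℤ) ≤ 0 → N g n b = 0
  base03 : ∀ b : Fin 3 → ℕ, Even (∑ i, b i) → N 0 3 b = 1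
  base11 : ∀ b : Fin 1 → ℕ, Even (b 0) → N 1 1 b = ((b 0 : ℚ) ^ 2 - 4) / 48
  recursion : ∀ (g n : ℕ), ¬(g = 0 ∧ n + 1 = 3) → ¬(g = 1 ∧ n + 1 = 1) →
    ∀ (b₀ : ℕ) (b : Fin n → ℕ),
    (b₀ : ℚ) * N g (n + 1) (Fin.cons b₀ b) =
      (∑ j : Fin n, (1 / 2 : ℚ) *
        ((∑ x ∈ Finset.HasAntidiagonal.antidiagonal (b₀ + b j),
            (x.1 : ℚ) * (x.2 : ℚ) * N g n (Function.update b j x.1)) +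
         (if b j ≤ b₀ then
            ∑ x ∈ Finset.HasAntidiagonal.antidiagonal (b₀ - b j),
              (x.1 : ℚ) * (x.2 : ℚ) * N g n (Function.update b j x.1)
          else
            - ∑ x ∈ Finset.HasAntidiagonal.antidiagonal (b j - b₀),
              (x.1 : ℚ) * (x.2 : ℚ) * N g n (Function.update b j x.1)))) +
      ∑ x ∈ Finset.HasAntidiagonal.antidiagonal b₀, ∑ y ∈ Finset.HasAntidiagonal.antidiagonal x.2,
        (x.1 : ℚ) * (y.1 : ℚ) * (y.2 : ℚ) *
        ((if 1 ≤ g then N (g - 1) (n + 2) (Fin.cons x.1 (Fin.cons y.1 b)) else 0) +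
         ∑ gg ∈ Finset.HasAntidiagonal.antidiagonal g, ∑ I : Finset (Fin n),
           N gg.1 (I.card + 1)
             (Fin.cons x.1 (fun i => b ((I.orderIsoOfFin rfl i : Fin n)))) *
           N gg.2 (Iᶜ.card + 1)
             (Fin.cons y.1 (fun i => b ((Iᶜ.orderIsoOfFin rfl i : Fin n)))))
def Zc {n : ℕ} (b : Fin n → ℕ) : ℕ := (Finset.univ.filter fun i => b i = 0).card

lemma Zc_eq {n : ℕ} (b : Fin n → ℕ) : Zc b = ∑ i, if b i = 0 then 1 else 0 :=
  Finset.card_filter _ _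

lemma Zc_cons {n : ℕ} (a : ℕ) (b : Fin n → ℕ) :
    Zc (Fin.cons a b) = (if a = 0 then 1 else 0) + Zc b := by
  rw [Zc_eq, Zc_eq, Fin.sum_univ_succ]
  simp

lemma sum_update' {n : ℕ} {M : Type*} [AddCommMonoid M] (b : Fin n → M) (j : Fin n) (v : M) :
    (∑ i, Function.update b j v i) + b j = (∑ i, b i) + v := by
  rw [Finset.sum_update_of_mem (Finset.mem_univ j),
    ← Finset.add_sum_erase _ b (Finset.mem_univ j), Finset.erase_eq]
  abel

lemma Zc_update {n : ℕ} (b : Fin n → ℕ) (j : Fin n) (v : ℕ) :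
    Zc (Function.update b j v) + (if b j = 0 then 1 else 0)
      = Zc b + (if v = 0 then 1 else 0) := by
  simp only [Zc_eq]
  have h : (fun i => if Function.update b j v i = 0 then (1:ℕ) else 0)
      = Function.update (fun i => if b i = 0 then (1:ℕ) else 0) j (if v = 0 then 1 else 0) := by
    funext i
    rcases eq_or_ne i j with rfl | hij
    · simp
    · simp [Function.update_of_ne hij]
  calc (∑ i, if Function.update b j v i = 0 then (1:ℕ) else 0) + (if b j = 0 then 1 else 0)
      = (∑ i, Function.update (fun i => if b i = 0 then (1:ℕ) else 0) j
          (if v = 0 then 1 else 0) i) + (if b j = 0 then 1 else 0) := by rw [h]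
    _ = _ := sum_update' _ _ _

lemma sum_orderIso {k : ℕ} {M : Type*} [AddCommMonoid M] (I : Finset (Fin k)) (f : Fin k → M) :
    ∑ i : Fin I.card, f (I.orderIsoOfFin rfl i) = ∑ t ∈ I, f t := by
  rw [← Finset.sum_coe_sort I f]
  exact Equiv.sum_comp (I.orderIsoOfFin rfl).toEquiv (fun t => f (t : Fin k))

lemma n_le_Zc_add_sum {n : ℕ} (b : Fin n → ℕ) : n ≤ Zc b + ∑ i, b i := by
  rw [Zc_eq, ← Finset.sum_add_distrib]
  calc (n:ℕ) = ∑ _i : Fin n, 1 := by simp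
  _ ≤ ∑ i, ((if b i = 0 then 1 else 0) + b i) :=
      Finset.sum_le_sum (fun i _ => by by_cases h : b i = 0 <;> simp [h]; omega)
theorem vanishing_aux (N : (g : ℕ) → (n : ℕ) → (Fin n → ℕ) → ℚ) (hN : LatticeCount N) :
    ∀ (m g n : ℕ) (b : Fin n → ℕ), 2*g+n ≤ m → 0 < 2*(g:ℤ)-2+(n:ℤ) → 0 < ∑ i, b i →
      ((∑ i, b i : ℕ) : ℤ) ≤ 4*(g:ℤ)-4+2*((n:ℤ) - (Zc b : ℤ)) → N g n b = 0 := by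
  intro m
  induction m with
  | zero =>
    intro g n b hm hst hpos hsum
    exfalso; omega
  | succ m IH =>
    intro g n b hm hst hpos hsum
    have kill : ∀ (g' n' : ℕ) (b' : Fin n' → ℕ), 2*g'+n' ≤ m →
        ((∑ i, b' i) % 2 = 1 ∨ 2*(g':ℤ)-2+(n':ℤ) ≤ 0 ∨
          (0 < ∑ i, b' i ∧ ((∑ i, b' i : ℕ) : ℤ) ≤ 4*(g':ℤ)-4+2*((n':ℤ) - (Zc b' : ℤ)))) →
        N g' n' b' = 0 := by
      rintro g' n' b' hm' (hodd | hunst | ⟨h1, h2⟩)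
      · exact hN.odd_vanish _ _ _ (Nat.odd_iff.2 hodd)
      · exact hN.unstable _ _ _ hunst
      · rcases le_or_gt (2*(g':ℤ)-2+(n':ℤ)) 0 with hst' | hst'
        · exact hN.unstable _ _ _ hst'
        · exact IH g' n' b' hm' hst' h1 h2
    rcases Nat.even_or_odd (∑ i, b i) with he | ho
    swap
    · exact hN.odd_vanish _ _ _ ho
    have he2 : (∑ i, b i) % 2 = 0 := Nat.even_iff.1 he
    cases n with
    | zero => simp at hpos
    | succ n' =>
    by_cases hg03 : g = 0 ∧ n' + 1 = 3
    · exfalso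
      obtain ⟨hg, hn3⟩ := hg03
      have hle := n_le_Zc_add_sum b
      subst hg
      omega
    by_cases hg11 : g = 1 ∧ n' + 1 = 1
    · obtain ⟨hg, hn1⟩ := hg11
      have hn0 : n' = 0 := by omega
      subst hg; subst hn0
      have hb0 : ∑ i, b i = b 0 := by simp
      have hbne : b 0 ≠ 0 := by omega
      have hZ : Zc b = 0 := by
        rw [Zc_eq, Fin.sum_univ_one, if_neg hbne]
      rw [hb0] at he2 hpos hsum
      rw [hZ] at hsum
      have hb2 : b 0 = 2 := by omega
      rw [hN.base11 b (by rw [hb2]; exact even_two), hb2]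
      norm_num
    -- main case
    obtain ⟨i, hi⟩ : ∃ i, b i ≠ 0 := by
      by_contra h
      push_neg at h
      simp [h] at hpos
    set σ : Equiv.Perm (Fin (n'+1)) := Equiv.swap 0 i with hσ
    set c : Fin (n'+1) → ℕ := b ∘ σ with hcdef
    have hNc : N g (n'+1) c = N g (n'+1) b := hN.symm g (n'+1) σ b
    have hSc : ∑ j, c j = ∑ j, b j := Equiv.sum_comp σ b
    have hZc : Zc c = Zc b := by
      rw [Zc_eq, Zc_eq]
      exact Equiv.sum_comp σ (fun x => if b x = 0 then 1 else 0)
    have hc0 : c 0 = b i := by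
      show b (σ 0) = b i
      rw [hσ]
      simp [Equiv.swap_apply_left]
    set b₀ : ℕ := c 0 with hb₀def
    set B : Fin n' → ℕ := Fin.tail c with hBdef
    have hcons : Fin.cons b₀ B = c := Fin.cons_self_tail c
    set s' : ℕ := ∑ j, B j with hs'
    set z' : ℕ := Zc B with hz'
    set S : ℕ := ∑ j, b j with hSdef
    have hb₀ne : b₀ ≠ 0 := by rw [hc0]; exact hi
    have hS : S = b₀ + s' := by
      rw [← hSc, ← hcons, Fin.sum_cons, hs']
    have hZb : Zc b = z' := by
      rw [← hZc, ← hcons, Zc_cons, if_neg hb₀ne, zero_add, hz']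
    rw [hZb] at hsum
    -- hsum : (S : ℤ) ≤ 4g - 4 + 2*((n'+1 : ℤ) - z')
    have hBj_le : ∀ j, B j ≤ s' := fun j =>
      Finset.single_le_sum (f := B) (fun i _ => Nat.zero_le _) (Finset.mem_univ j)
    have E := hN.recursion g n' hg03 hg11 b₀ B
    rw [hcons, hNc] at E
    have hE0 : (b₀ : ℚ) * N g (n'+1) b = 0 + 0 := by
      rw [E]
      congr 1
      · -- first big sum
        refine Finset.sum_eq_zero fun j _ => ?_
        have hA : (∑ x ∈ Finset.HasAntidiagonal.antidiagonal (b₀ + B j),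
            (x.1 : ℚ) * (x.2 : ℚ) * N g n' (Function.update B j x.1)) = 0 := by
          refine Finset.sum_eq_zero fun x hx => ?_
          rw [Finset.HasAntidiagonal.mem_antidiagonal] at hx
          rcases Nat.eq_zero_or_pos x.1 with h10 | h1p
          · simp [h10]
          rcases Nat.eq_zero_or_pos x.2 with h20 | h2p
          · simp [h20]
          rw [kill g n' (Function.update B j x.1) (by omega) ?_, mul_zero]
          have hsu := sum_update' B j x.1
          have hzu := Zc_update B j x.1
          rw [if_neg (by omega : ¬ x.1 = 0)] at hzu
          have hbl := hBj_le j
          by_cases hB0 : B j = 0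
          · rw [if_pos hB0] at hzu
            omega
          · rw [if_neg hB0] at hzu
            omega
        have hB' : (if B j ≤ b₀ then
              ∑ x ∈ Finset.HasAntidiagonal.antidiagonal (b₀ - B j),
                (x.1 : ℚ) * (x.2 : ℚ) * N g n' (Function.update B j x.1)
            else
              - ∑ x ∈ Finset.HasAntidiagonal.antidiagonal (B j - b₀),
                (x.1 : ℚ) * (x.2 : ℚ) * N g n' (Function.update B j x.1)) = 0 := by
          split_ifs with hle
          · refine Finset.sum_eq_zero fun x hx => ?_
            rw [Finset.HasAntidiagonal.mem_antidiagonal] at hx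
            rcases Nat.eq_zero_or_pos x.1 with h10 | h1p
            · simp [h10]
            rcases Nat.eq_zero_or_pos x.2 with h20 | h2p
            · simp [h20]
            rw [kill g n' (Function.update B j x.1) (by omega) ?_, mul_zero]
            have hsu := sum_update' B j x.1
            have hzu := Zc_update B j x.1
            rw [if_neg (by omega : ¬ x.1 = 0)] at hzu
            have hbl := hBj_le j
            by_cases hB0 : B j = 0
            · rw [if_pos hB0] at hzu
              omega
            · rw [if_neg hB0] at hzu
              omega
          · rw [neg_eq_zero]
            refine Finset.sum_eq_zero fun x hx => ?_
            rw [Finset.HasAntidiagonal.mem_antidiagonal] at hx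
            rcases Nat.eq_zero_or_pos x.1 with h10 | h1p
            · simp [h10]
            rcases Nat.eq_zero_or_pos x.2 with h20 | h2p
            · simp [h20]
            rw [kill g n' (Function.update B j x.1) (by omega) ?_, mul_zero]
            have hsu := sum_update' B j x.1
            have hzu := Zc_update B j x.1
            rw [if_neg (by omega : ¬ x.1 = 0), if_neg (by omega : ¬ B j = 0)] at hzu
            have hbl := hBj_le j
            omega
        rw [hA, hB', add_zero, mul_zero]
      · -- second big sum
        refine Finset.sum_eq_zero fun x hx => Finset.sum_eq_zero fun y hy => ?_
        rw [Finset.HasAntidiagonal.mem_antidiagonal] at hx hy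
        rcases Nat.eq_zero_or_pos x.1 with h10 | h1p
        · simp [h10]
        rcases Nat.eq_zero_or_pos y.1 with h20 | h2p
        · simp [h20]
        rcases Nat.eq_zero_or_pos y.2 with h30 | h3p
        · simp [h30]
        have hG : (if 1 ≤ g then N (g - 1) (n' + 2) (Fin.cons x.1 (Fin.cons y.1 B)) else 0)
            = 0 := by
          split_ifs with hg1
          · refine kill (g-1) (n'+2) _ (by omega) ?_
            have hsd : ∑ i, Fin.cons x.1 (Fin.cons y.1 B) i = x.1 + (y.1 + s') := by
              rw [Fin.sum_cons, Fin.sum_cons]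
            have hzd : Zc (Fin.cons x.1 (Fin.cons y.1 B)) = z' := by
              rw [Zc_cons, Zc_cons, if_neg (by omega : ¬ x.1 = 0),
                if_neg (by omega : ¬ y.1 = 0), zero_add, zero_add, ← hz']
            rw [hsd, hzd]
            omega
          · rfl
        have hH : (∑ gg ∈ Finset.HasAntidiagonal.antidiagonal g, ∑ I : Finset (Fin n'),
            N gg.1 (I.card + 1)
              (Fin.cons x.1 (fun i => B ((I.orderIsoOfFin rfl i : Fin n')))) *
            N gg.2 (Iᶜ.card + 1)
              (Fin.cons y.1 (fun i => B ((Iᶜ.orderIsoOfFin rfl i : Fin n'))))) = 0 := by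
          refine Finset.sum_eq_zero fun gg hgg => Finset.sum_eq_zero fun I _ => ?_
          rw [Finset.HasAntidiagonal.mem_antidiagonal] at hgg
          have hcard : I.card + Iᶜ.card = n' := by
            rw [Finset.card_add_card_compl]; simp
          set SI : ℕ := ∑ t ∈ I, B t with hSI
          set SIc : ℕ := ∑ t ∈ Iᶜ, B t with hSIc
          set zI : ℕ := ∑ t ∈ I, if B t = 0 then 1 else 0 with hzI
          set zIc : ℕ := ∑ t ∈ Iᶜ, if B t = 0 then 1 else 0 with hzIc
          have hSsplit : SI + SIc = s' := Finset.sum_add_sum_compl I B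
          have hzsplit : zI + zIc = z' := by
            rw [hz', Zc_eq]
            exact Finset.sum_add_sum_compl I _
          have hSu : ∑ i, Fin.cons x.1 (fun i => B ((I.orderIsoOfFin rfl i : Fin n'))) i
              = x.1 + SI := by
            rw [Fin.sum_cons, hSI]
            exact congrArg _ (sum_orderIso I B)
          have hSv : ∑ i, Fin.cons y.1 (fun i => B ((Iᶜ.orderIsoOfFin rfl i : Fin n'))) i
              = y.1 + SIc := by
            rw [Fin.sum_cons, hSIc]
            exact congrArg _ (sum_orderIso Iᶜ B)
          have hZu : Zc (Fin.cons x.1 (fun i => B ((I.orderIsoOfFin rfl i : Fin n')))) = zI := by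
            rw [Zc_cons, if_neg (by omega : ¬ x.1 = 0), zero_add, Zc_eq, hzI]
            exact sum_orderIso I (fun t => if B t = 0 then 1 else 0)
          have hZv : Zc (Fin.cons y.1 (fun i => B ((Iᶜ.orderIsoOfFin rfl i : Fin n')))) = zIc := by
            rw [Zc_cons, if_neg (by omega : ¬ y.1 = 0), zero_add, Zc_eq, hzIc]
            exact sum_orderIso Iᶜ (fun t => if B t = 0 then 1 else 0)
          by_cases hst1 : 2*(gg.1:ℤ)-2+((I.card+1 : ℕ):ℤ) ≤ 0
          · rw [hN.unstable _ _ _ hst1, zero_mul]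
          by_cases hst2 : 2*(gg.2:ℤ)-2+((Iᶜ.card+1 : ℕ):ℤ) ≤ 0
          · rw [hN.unstable _ _ _ hst2, mul_zero]
          push_neg at hst1 hst2
          by_cases ho1 : (x.1 + SI) % 2 = 1
          · rw [kill gg.1 (I.card+1) _ (by omega) (Or.inl (by rw [hSu]; exact ho1)), zero_mul]
          by_cases ho2 : (y.1 + SIc) % 2 = 1
          · rw [kill gg.2 (Iᶜ.card+1) _ (by omega) (Or.inl (by rw [hSv]; exact ho2)), mul_zero]
          rcases le_or_gt ((x.1 + SI : ℕ) : ℤ) (4*(gg.1:ℤ)-4+2*(((I.card+1 : ℕ):ℤ) - (zI:ℤ)))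
            with hb1 | hb1
          · rw [kill gg.1 (I.card+1) _ (by omega)
              (Or.inr (Or.inr ⟨by rw [hSu]; omega, by rw [hSu, hZu]; exact hb1⟩)), zero_mul]
          · rw [kill gg.2 (Iᶜ.card+1) _ (by omega)
              (Or.inr (Or.inr ⟨by rw [hSv]; omega, by rw [hSv, hZv]; omega⟩)), mul_zero]
        rw [hG, hH, add_zero, mul_zero]
    rw [add_zero] at hE0
    have hne : (b₀ : ℚ) ≠ 0 := Nat.cast_ne_zero.2 hb₀ne
    exact (mul_eq_zero.1 hE0).resolve_left hne

/-- Vanishing result allowing zero entries: if `p` of the `bᵢ` are zero and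
`0 < ∑ bᵢ ≤ 4g − 4 + 2(n − p)` then `N_{g,n}(b₁,…,bₙ) = 0`. -/
theorem vanishing_with_zeros
    (N : (g : ℕ) → (n : ℕ) → (Fin n → ℕ) → ℚ) (hN : LatticeCount N)
    (g n : ℕ) (hn : 1 ≤ n) (hstable : 0 < 2 * (g : ℤ) - 2 + (n : ℤ))
    (b : Fin n → ℕ) (hpos : 0 < ∑ i, b i)
    (hsum : (∑ i, (b i : ℤ)) ≤
      4 * (g : ℤ) - 4 + 2 * ((n : ℤ) - ((Finset.univ.filter fun i => b i = 0).card : ℤ))) :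
    N g n b = 0 := by
  rw [← Nat.cast_sum] at hsum
  exact vanishing_aux N hN (2*g+n) g n b le_rfl hstable hpos hsum
end

section
/- Let p ∈ ℂ[X] be a polynomial. Then the series f₊(z) = Σ_{m≥1} p((2m)²) z^{2m} converges for |z| < 1 and defines a function that extends to a holomorphic function F₊ on ℂ ∖ {1, −1}, and this extension satisfies F₊(z) + F₊(1/z) = −p(0) for all z ∈ ℂ ∖ {0, 1, −1}. -/
open Polynomial

lemma summable_aux (q : Polynomial ℂ) {w : ℂ} (hw : ‖w‖ < 1) :
    Summable fun m : ℕ => q.eval ((m : ℕ) : ℂ) * w ^ m := by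
  induction q using Polynomial.induction_on' with
  | add f g hf hg =>
      simpa [add_mul] using hf.add hg
  | monomial n a =>
      simpa [Polynomial.eval_monomial, mul_assoc] using
        (summable_pow_mul_geometric_of_norm_lt_one n hw).mul_left a

lemma key_telescope {a : ℕ → ℂ} {w S T : ℂ}
    (hS : HasSum (fun m : ℕ => a (m + 1) * w ^ (m + 1)) S)
    (hT : HasSum (fun m : ℕ => (a (m + 1) - a m) * w ^ (m + 1)) T) :
    (1 - w) * S = T + a 0 * w := by
  have h1 : HasSum (fun m : ℕ => a (m + 1) * w ^ (m + 2)) (w * S) := by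
    have := hS.mul_left w
    convert this using 2 with m
    · rfl
    ring
  have h2 : HasSum (fun m : ℕ => a m * w ^ (m + 1)) (w * S + a 0 * w) := by
    have := (hasSum_nat_add_iff (f := fun m : ℕ => a m * w ^ (m + 1)) 1).mp h1
    simpa using this
  have h3 := hS.sub h2
  have h4 : (fun m : ℕ => a (m + 1) * w ^ (m + 1) - a m * w ^ (m + 1)) =
      fun m : ℕ => (a (m + 1) - a m) * w ^ (m + 1) := by
    funext m; ring
  rw [h4] at h3
  have := hT.unique h3
  linear_combination -this

lemma main_aux : ∀ (d : ℕ) (q : Polynomial ℂ), q.natDegree ≤ d →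
    ∃ G G' : ℂ → ℂ,
      DifferentiableOn ℂ G {w : ℂ | w ≠ 1} ∧
      DifferentiableOn ℂ G' {w : ℂ | w ≠ 1} ∧
      (∀ w : ℂ, ‖w‖ < 1 →
        HasSum (fun m : ℕ => q.eval (((m + 1 : ℕ) : ℂ)) * w ^ (m + 1)) (G w)) ∧
      (∀ w : ℂ, ‖w‖ < 1 →
        HasSum (fun m : ℕ => q.eval (-((m + 1 : ℕ) : ℂ)) * w ^ (m + 1)) (G' w)) ∧
      (∀ w : ℂ, w ≠ 0 → w ≠ 1 → G w + G' w⁻¹ = - q.eval 0) := by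
  intro d
  induction d with
  | zero =>
      intro q hq
      obtain ⟨c, rfl⟩ : ∃ c, q = C c := ⟨q.coeff 0, eq_C_of_natDegree_le_zero hq⟩
      have hgeom : ∀ w : ℂ, ‖w‖ < 1 → HasSum
          (fun n : ℕ => (C c).eval (((n + 1 : ℕ) : ℂ)) * w ^ (n + 1)) (c * w / (1 - w)) := by
        intro w hw
        have h1w : (1 : ℂ) - w ≠ 0 := by
          intro h; rw [sub_eq_zero] at h; rw [← h] at hw; simp at hw
        have h := (hasSum_geometric_of_norm_lt_one hw).mul_left (c * w)
        have h2 : (fun n : ℕ => c * w * w ^ n) =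
            fun n : ℕ => (C c).eval (((n + 1 : ℕ) : ℂ)) * w ^ (n + 1) := by
          funext n; rw [eval_C, pow_succ]; ring
        rw [h2] at h
        rwa [div_eq_mul_inv]
      refine ⟨fun w => c * w / (1 - w), fun w => c * w / (1 - w), ?_, ?_, ?_, ?_, ?_⟩
      · exact (differentiableOn_id.const_mul c).div
          ((differentiableOn_const 1).sub differentiableOn_id)
          (fun w hw => sub_ne_zero.mpr (Ne.symm hw))
      · exact (differentiableOn_id.const_mul c).div
          ((differentiableOn_const 1).sub differentiableOn_id)
          (fun w hw => sub_ne_zero.mpr (Ne.symm hw))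
      · exact hgeom
      · intro w hw
        convert hgeom w hw using 2 with n
        rw [eval_C, eval_C]
      · intro w hw0 hw1
        have h1 : (1 : ℂ) - w ≠ 0 := sub_ne_zero.mpr (Ne.symm hw1)
        have h2 : (1 : ℂ) - w⁻¹ ≠ 0 := by
          rw [sub_ne_zero]
          intro h
          exact hw1 (by rw [← inv_inv w, ← h, inv_one])
        rw [eval_C, div_add_div _ _ h1 h2, div_eq_iff (mul_ne_zero h1 h2)]
        linear_combination (-c) * mul_inv_cancel₀ hw0
  | succ d ih =>
      intro q hq
      set s : Polynomial ℂ := q - q.comp (X - C 1) with hs_def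
      have hs_eval : ∀ x : ℂ, s.eval x = q.eval x - q.eval (x - 1) := by
        intro x; simp [hs_def]
      have hs_deg : s.natDegree ≤ d := by
        by_cases h0 : q.natDegree = 0
        · obtain ⟨c, rfl⟩ : ∃ c, q = C c := ⟨q.coeff 0, eq_C_of_natDegree_le_zero h0.le⟩
          simp [hs_def]
        · by_cases hsz : s = 0
          · simp [hsz]
          have hq0 : q ≠ 0 := fun h => h0 (by simp [h])
          have hnd1 : (X - C (1 : ℂ)).natDegree = 1 := natDegree_X_sub_C 1
          have hlc1 : (X - C (1 : ℂ)).leadingCoeff = 1 := (monic_X_sub_C (1 : ℂ)).leadingCoeff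
          have hcomp_lc : (q.comp (X - C 1)).leadingCoeff = q.leadingCoeff := by
            rw [leadingCoeff_comp (by rw [hnd1]; exact one_ne_zero), hlc1, one_pow, mul_one]
          have hcomp_nd : (q.comp (X - C 1)).natDegree = q.natDegree := by
            rw [natDegree_comp, hnd1, mul_one]
          have hcomp0 : q.comp (X - C 1) ≠ 0 := by
            intro h
            rw [h] at hcomp_lc
            exact hq0 (leadingCoeff_eq_zero.mp hcomp_lc.symm)
          have hdeg_eq : q.degree = (q.comp (X - C 1)).degree := by
            rw [degree_eq_natDegree hq0, degree_eq_natDegree hcomp0, hcomp_nd]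
          have hlt : s.degree < q.degree := degree_sub_lt hdeg_eq hq0 hcomp_lc.symm
          have := natDegree_lt_natDegree hsz hlt
          omega
      obtain ⟨Gs, Gs', hGsd, hGs'd, hGs, hGs', hfe⟩ := ih s hs_deg
      refine ⟨fun w => (Gs w + q.eval 0 * w) / (1 - w),
              fun w => (-(w * Gs' w) - s.eval 0 * w + q.eval 0 * w) / (1 - w),
              ?_, ?_, ?_, ?_, ?_⟩
      · exact (hGsd.add ((differentiableOn_id.const_mul _))).div
          ((differentiableOn_const 1).sub differentiableOn_id)
          (fun w hw => sub_ne_zero.mpr (Ne.symm hw))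
      · refine DifferentiableOn.div ?_
          ((differentiableOn_const 1).sub differentiableOn_id)
          (fun w hw => sub_ne_zero.mpr (Ne.symm hw))
        exact ((differentiableOn_id.mul hGs'd).neg.sub (differentiableOn_id.const_mul _)).add
          (differentiableOn_id.const_mul _)
      · intro w hw
        have h1w : (1 : ℂ) - w ≠ 0 := by
          intro h; rw [sub_eq_zero] at h; rw [← h] at hw; simp at hw
        have hsum : Summable fun m : ℕ => q.eval (((m + 1 : ℕ) : ℂ)) * w ^ (m + 1) := by
          have := (summable_nat_add_iff (f := fun m : ℕ => q.eval (((m : ℕ) : ℂ)) * w ^ m) 1).mpr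
            (summable_aux q hw)
          simpa using this
        obtain ⟨S, hS⟩ := hsum
        have hT : HasSum (fun m : ℕ =>
            ((fun k : ℕ => q.eval ((k : ℂ))) (m + 1) - (fun k : ℕ => q.eval ((k : ℂ))) m)
              * w ^ (m + 1)) (Gs w) := by
          convert hGs w hw using 2 with m
          rw [hs_eval]
          push_cast
          ring_nf
        have hkey := key_telescope (a := fun k : ℕ => q.eval ((k : ℂ))) hS hT
        simp only [Nat.cast_zero] at hkey
        have hSval : S = (Gs w + q.eval 0 * w) / (1 - w) := by
          field_simp
          linear_combination hkey
        rwa [hSval] at hS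
      · intro w hw
        have h1w : (1 : ℂ) - w ≠ 0 := by
          intro h; rw [sub_eq_zero] at h; rw [← h] at hw; simp at hw
        have hsum : Summable fun m : ℕ => q.eval (-((m + 1 : ℕ) : ℂ)) * w ^ (m + 1) := by
          have h := (summable_nat_add_iff
            (f := fun m : ℕ => (q.comp (-X)).eval (((m : ℕ) : ℂ)) * w ^ m) 1).mpr
            (summable_aux (q.comp (-X)) hw)
          simpa [eval_comp] using h
        obtain ⟨S, hS⟩ := hsum
        have hT : HasSum (fun m : ℕ =>
            ((fun k : ℕ => q.eval (-(k : ℂ))) (m + 1) - (fun k : ℕ => q.eval (-(k : ℂ))) m)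
              * w ^ (m + 1)) (-(w * Gs' w) - s.eval 0 * w) := by
          have h1 := (hGs' w hw).mul_left w
          have h2 : HasSum (fun m : ℕ => (fun k : ℕ => s.eval (-(k : ℂ)) * w ^ (k + 1)) (m + 1))
              (w * Gs' w) := by
            convert h1 using 2 with m
            · rfl
            push_cast
            ring
          have h3 := (hasSum_nat_add_iff (f := fun k : ℕ => s.eval (-(k : ℂ)) * w ^ (k + 1)) 1).mp h2
          simp only [Finset.range_one, Finset.sum_singleton, Nat.cast_zero, neg_zero,
            pow_one] at h3
          have h5 : HasSum (fun m : ℕ => -(s.eval (-(m : ℂ)) * w ^ (m + 1)))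
              (-(w * Gs' w) - s.eval 0 * w) := by
            convert h3.neg using 1
            · rfl
            ring
          convert h5 using 2 with m
          rw [hs_eval]
          push_cast
          ring_nf
        have hkey := key_telescope (a := fun k : ℕ => q.eval (-(k : ℂ))) hS hT
        simp only [Nat.cast_zero, neg_zero] at hkey
        have hSval : S = (-(w * Gs' w) - s.eval 0 * w + q.eval 0 * w) / (1 - w) := by
          field_simp
          linear_combination hkey
        rwa [hSval] at hS
      · intro w hw0 hw1
        have h1 : (1 : ℂ) - w ≠ 0 := sub_ne_zero.mpr (Ne.symm hw1)
        have h2 : (1 : ℂ) - w⁻¹ ≠ 0 := by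
          rw [sub_ne_zero]
          intro h
          exact hw1 (by rw [← inv_inv w, ← h, inv_one])
        have hrel := hfe w hw0 hw1
        rw [div_add_div _ _ h1 h2, div_eq_iff (mul_ne_zero h1 h2)]
        linear_combination (1 - w⁻¹) * hrel +
          (Gs' w⁻¹ + s.eval 0 - q.eval 0) * mul_inv_cancel₀ hw0

/-- For a polynomial `p`, the even generating series
`f₊(z) = ∑_{m ≥ 1} p((2m)²) z^(2m)` converges for `‖z‖ < 1` and extends to a
holomorphic function `F₊` on `ℂ ∖ {1, −1}` satisfying
`F₊(z) + F₊(1/z) = −p(0)` for all `z ∉ {0, 1, −1}`. -/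
theorem even_series_extension (p : Polynomial ℂ) :
    ∃ F : ℂ → ℂ,
      DifferentiableOn ℂ F {z : ℂ | z ≠ 1 ∧ z ≠ -1} ∧
      (∀ z : ℂ, ‖z‖ < 1 →
        HasSum (fun m : ℕ =>
          p.eval (((2 * (m + 1) : ℕ) : ℂ) ^ 2) * z ^ (2 * (m + 1))) (F z)) ∧
      (∀ z : ℂ, z ≠ 0 → z ≠ 1 → z ≠ -1 → F z + F z⁻¹ = - p.eval 0) := by
  set q : Polynomial ℂ := p.comp (C 4 * X ^ 2) with hq_def
  have hq_eval : ∀ x : ℂ, q.eval x = p.eval (4 * x ^ 2) := by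
    intro x; simp [hq_def, eval_comp]
  obtain ⟨G, G', hGd, hG'd, hG, hG', hfe⟩ := main_aux q.natDegree q le_rfl
  have hmap : Set.MapsTo (fun z : ℂ => z ^ 2) {z : ℂ | z ≠ 1 ∧ z ≠ -1} {w : ℂ | w ≠ 1} := by
    intro z hz h
    simp only [Set.mem_setOf_eq] at *
    have h2 : (z - 1) * (z + 1) = 0 := by linear_combination h
    rcases mul_eq_zero.mp h2 with h3 | h3
    · exact hz.1 (by linear_combination h3)
    · exact hz.2 (by linear_combination h3)
  have hsq : DifferentiableOn ℂ (fun z : ℂ => z ^ 2) {z : ℂ | z ≠ 1 ∧ z ≠ -1} :=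
    (differentiable_pow 2).differentiableOn
  refine ⟨fun z => (G (z ^ 2) + G' (z ^ 2)) / 2, ?_, ?_, ?_⟩
  · exact ((hGd.comp hsq hmap).add (hG'd.comp hsq hmap)).div_const 2
  · intro z hz
    have hw : ‖z ^ 2‖ < 1 := by
      rw [norm_pow]
      exact pow_lt_one₀ (norm_nonneg z) hz two_ne_zero
    have h1 := hG (z ^ 2) hw
    have h2 := hG' (z ^ 2) hw
    have h3 := (h1.add h2).div_const 2
    convert h3 using 2 with m
    · rfl
    rw [hq_eval, hq_eval, neg_sq]
    have hc : ((2 * (m + 1) : ℕ) : ℂ) ^ 2 = 4 * ((m + 1 : ℕ) : ℂ) ^ 2 := by push_cast; ring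
    rw [hc, ← pow_mul]
    ring
  · intro z hz0 hz1 hzn
    have hw0 : z ^ 2 ≠ 0 := pow_ne_zero 2 hz0
    have hw1 : z ^ 2 ≠ 1 := hmap (Set.mem_setOf_eq ▸ ⟨hz1, hzn⟩)
    have hw1' : (z ^ 2)⁻¹ ≠ 1 := by
      intro h
      exact hw1 (by rw [← inv_inv (z ^ 2), h, inv_one])
    have e1 := hfe (z ^ 2) hw0 hw1
    have e2 := hfe ((z ^ 2)⁻¹) (inv_ne_zero hw0) hw1'
    rw [inv_inv] at e2
    have hq0 : q.eval 0 = p.eval 0 := by rw [hq_eval]; norm_num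
    simp only [inv_pow]
    rw [hq0] at e1 e2
    linear_combination (e1 + e2) / 2
end

section
/- Let p ∈ ℂ[X] be a polynomial. Then the series f₋(z) = Σ_{m≥0} p((2m+1)²) z^{2m+1} converges for |z| < 1 and defines a function that extends to a holomorphic function F₋ on ℂ ∖ {1, −1}, and this extension satisfies F₋(z) + F₋(1/z) = 0 for all z ∈ ℂ ∖ {0, 1, −1}. -/
open Filter Set Topology

namespace OddSeriesExt

noncomputable section

def S : Set ℂ := {z : ℂ | z ≠ 1 ∧ z ≠ -1}

lemma isOpen_S : IsOpen S := by
  have : S = {(1:ℂ)}ᶜ ∩ {(-1:ℂ)}ᶜ := by ext z; simp [S]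
  rw [this]
  exact isOpen_compl_singleton.inter isOpen_compl_singleton

lemma inv_ne_one {z : ℂ} (h : z ≠ 1) : z⁻¹ ≠ 1 := by
  intro hh
  apply h
  rw [← inv_inv z, hh]
  norm_num

lemma inv_ne_neg_one {z : ℂ} (h : z ≠ -1) : z⁻¹ ≠ -1 := by
  intro hh
  apply h
  rw [← inv_inv z, hh]
  norm_num

lemma one_sub_sq_ne {z : ℂ} (h1 : z ≠ 1) (h2 : z ≠ -1) : 1 - z^2 ≠ 0 := by
  intro h
  have hz2 : (z - 1) * (z + 1) = 0 := by linear_combination -h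
  rcases mul_eq_zero.mp hz2 with h | h
  · exact h1 (by linear_combination h)
  · exact h2 (by linear_combination h)

lemma summable_aux (j : ℕ) {r : ℝ} (h0 : 0 ≤ r) (hr : r < 1) :
    Summable (fun m : ℕ => ((2*m+1:ℕ):ℝ)^j * r^(2*m+1)) := by
  have h := summable_pow_mul_geometric_of_norm_lt_one (R := ℝ) j
    (r := r) (by rwa [Real.norm_eq_abs, abs_of_nonneg h0])
  have hi : Function.Injective (fun m : ℕ => 2*m+1) := fun a b hab => by
    simp only at hab; omega
  exact (h.comp_injective hi).congr fun m => rfl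

lemma hasSum_step (j : ℕ) (F : ℂ → ℂ)
    (hF : ∀ z : ℂ, ‖z‖ < 1 → HasSum (fun m : ℕ => ((2*m+1:ℕ):ℂ)^j * z^(2*m+1)) (F z)) :
    ∀ z : ℂ, ‖z‖ < 1 → HasSum (fun m : ℕ => ((2*m+1:ℕ):ℂ)^(j+1) * z^(2*m+1))
      (z * deriv F z) := by
  intro z hz
  set r : ℝ := (‖z‖ + 1) / 2 with hrdef
  have hr0 : 0 < r := by positivity
  have hzr : ‖z‖ < r := by rw [hrdef]; linarith
  have hr1 : r < 1 := by rw [hrdef]; linarith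
  set g : ℕ → ℂ → ℂ := fun m y => ((2*m+1:ℕ):ℂ)^j * y^(2*m+1) with hgdef
  set g' : ℕ → ℂ → ℂ := fun m y => ((2*m+1:ℕ):ℂ)^(j+1) * y^(2*m) with hg'def
  set u : ℕ → ℝ := fun m => ((2*m+1:ℕ):ℝ)^(j+1) * r^(2*m+1) * r⁻¹ with hudef
  have hu : Summable u := (summable_aux (j+1) hr0.le hr1).mul_right r⁻¹
  have hopen : IsOpen (Metric.ball (0:ℂ) r) := Metric.isOpen_ball
  have hconn := (convex_ball (0:ℂ) r).isPreconnected
  have hg : ∀ m (y : ℂ), y ∈ Metric.ball (0:ℂ) r → HasDerivAt (g m) (g' m y) y := by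
    intro m y _
    have h := (hasDerivAt_pow (2*m+1) y).const_mul (((2*m+1:ℕ):ℂ)^j)
    refine h.congr_deriv ?_
    have h2 : 2*m+1-1 = 2*m := by omega
    rw [h2, hg'def]
    push_cast
    ring
  have hg' : ∀ m (y : ℂ), y ∈ Metric.ball (0:ℂ) r → ‖g' m y‖ ≤ u m := by
    intro m y hy
    have hy' : ‖y‖ ≤ r := le_of_lt (by simpa using hy)
    have hnorm : ‖g' m y‖ = ((2*m+1:ℕ):ℝ)^(j+1) * ‖y‖^(2*m) := by
      rw [hg'def]
      simp only
      rw [norm_mul, norm_pow, norm_pow, Complex.norm_natCast]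
    have hum : u m = ((2*m+1:ℕ):ℝ)^(j+1) * r^(2*m) := by
      rw [hudef]
      simp only
      rw [pow_succ]
      field_simp
      push_cast
      ring
    rw [hnorm, hum]
    have h1 : ‖y‖^(2*m) ≤ r^(2*m) := pow_le_pow_left₀ (norm_nonneg y) hy' _
    have : (0:ℝ) ≤ ((2*m+1:ℕ):ℝ)^(j+1) := by positivity
    exact mul_le_mul_of_nonneg_left h1 this
  have h0mem : (0:ℂ) ∈ Metric.ball (0:ℂ) r := by simpa using hr0
  have hg0 : Summable (fun m => g m 0) := by
    have : (fun m => g m (0:ℂ)) = fun _ => 0 := by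
      funext m; simp [hgdef]
    rw [this]; exact summable_zero
  have hzmem : z ∈ Metric.ball (0:ℂ) r := by simpa using hzr
  have key := hasDerivAt_tsum_of_isPreconnected hu hopen hconn hg hg' h0mem hg0 hzmem
  have hFeq : F =ᶠ[𝓝 z] (fun y => ∑' m, g m y) := by
    filter_upwards [hopen.mem_nhds hzmem] with y hy
    have hy1 : ‖y‖ < 1 := lt_trans (by simpa using hy) hr1
    exact ((hF y hy1).tsum_eq).symm
  have hderiv : deriv F z = ∑' m, g' m z := by
    rw [hFeq.deriv_eq, key.deriv]
  have hgsum : Summable (fun m => g' m z) :=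
    Summable.of_norm_bounded hu (fun m => hg' m z hzmem)
  have hmain := (hgsum.hasSum).mul_left z
  rw [← hderiv] at hmain
  have hfun : (fun m : ℕ => ((2*m+1:ℕ):ℂ)^(j+1) * z^(2*m+1)) = fun i => z * g' i z := by
    funext m
    rw [hg'def]
    rw [pow_succ]
    ring
  rw [hfun]
  exact hmain

lemma diff_step (F : ℂ → ℂ) (hF : DifferentiableOn ℂ F S) :
    DifferentiableOn ℂ (fun z => z * deriv F z) S := by
  have hA : AnalyticOnNhd ℂ F S := hF.analyticOnNhd isOpen_S
  exact ((analyticOnNhd_id).mul hA.deriv).differentiableOn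

lemma sym_step (F : ℂ → ℂ) (hF : DifferentiableOn ℂ F S) (ε : ℂ)
    (hsym : ∀ z : ℂ, z ≠ 0 → z ≠ 1 → z ≠ -1 → F z⁻¹ = ε * F z) :
    ∀ z : ℂ, z ≠ 0 → z ≠ 1 → z ≠ -1 →
      z⁻¹ * deriv F z⁻¹ = -ε * (z * deriv F z) := by
  intro z hz0 hz1 hz2
  have hzS : z ∈ S := ⟨hz1, hz2⟩
  have hinvS : z⁻¹ ∈ S := ⟨inv_ne_one hz1, inv_ne_neg_one hz2⟩
  have hFz : DifferentiableAt ℂ F z := hF.differentiableAt (isOpen_S.mem_nhds hzS)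
  have hFzi : DifferentiableAt ℂ F z⁻¹ := hF.differentiableAt (isOpen_S.mem_nhds hinvS)
  have hcomp : HasDerivAt (fun w => F w⁻¹) (deriv F z⁻¹ * (-(z^2)⁻¹)) z :=
    HasDerivAt.comp z hFzi.hasDerivAt (hasDerivAt_inv hz0)
  have hS' : IsOpen (S ∩ {w : ℂ | w ≠ 0}) := isOpen_S.inter (isOpen_ne)
  have hmemS' : z ∈ S ∩ {w : ℂ | w ≠ 0} := ⟨hzS, hz0⟩
  have hev : (fun w => F w⁻¹) =ᶠ[𝓝 z] (fun w => ε * F w) := by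
    filter_upwards [hS'.mem_nhds hmemS'] with w hw
    exact hsym w hw.2 hw.1.1 hw.1.2
  have h2 : HasDerivAt (fun w => ε * F w) (deriv F z⁻¹ * (-(z^2)⁻¹)) z :=
    hcomp.congr_of_eventuallyEq hev.symm
  have h3 : HasDerivAt (fun w => ε * F w) (ε * deriv F z) z := hFz.hasDerivAt.const_mul ε
  have h4 : deriv F z⁻¹ * (-(z^2)⁻¹) = ε * deriv F z := h2.unique h3
  have hz2' : (z^2) ≠ 0 := pow_ne_zero _ hz0
  have h5 : deriv F z⁻¹ = -ε * z^2 * deriv F z := by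
    field_simp at h4
    rw [inv_eq_one_div]
    linear_combination -h4
  rw [h5]
  field_simp

lemma key (k : ℕ) : ∃ F : ℂ → ℂ,
    DifferentiableOn ℂ F S ∧
    (∀ z : ℂ, ‖z‖ < 1 →
      HasSum (fun m : ℕ => ((2*m+1:ℕ):ℂ)^(2*k) * z^(2*m+1)) (F z)) ∧
    (∀ z : ℂ, z ≠ 0 → z ≠ 1 → z ≠ -1 → F z + F z⁻¹ = 0) := by
  induction k with
  | zero =>
    refine ⟨fun z => z * (1 - z^2)⁻¹, ?_, ?_, ?_⟩
    · apply DifferentiableOn.mul differentiableOn_id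
      apply DifferentiableOn.inv
      · exact (differentiableOn_const 1).sub (differentiable_pow 2).differentiableOn
      · exact fun z hz => one_sub_sq_ne hz.1 hz.2
    · intro z hz
      have hz2 : ‖z^2‖ < 1 := by
        rw [norm_pow]
        exact pow_lt_one₀ (norm_nonneg z) hz (by norm_num)
      have h := (hasSum_geometric_of_norm_lt_one hz2).mul_left z
      have hfun : (fun m : ℕ => ((2*m+1:ℕ):ℂ)^(2*0) * z^(2*m+1)) = fun m => z * (z^2)^m := by
        funext m
        simp only [Nat.mul_zero, pow_zero, one_mul, ← pow_mul]
        rw [pow_add, pow_mul]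
        ring
      rw [hfun]
      exact h
    · intro z h0 h1 h2
      have ha : 1 - z^2 ≠ 0 := one_sub_sq_ne h1 h2
      have hw : -z + z^3 ≠ 0 := by
        have h := mul_ne_zero (neg_ne_zero.mpr h0) ha
        intro h'; apply h; linear_combination h'
      field_simp
      ring_nf
      have hb : -1 + z^2 ≠ 0 := by
        intro h; apply ha; linear_combination -h
      field_simp
      ring
  | succ k ih =>
    obtain ⟨F, hFd, hFs, hFe⟩ := ih
    set H : ℂ → ℂ := fun z => z * deriv F z with hHdef
    set G : ℂ → ℂ := fun z => z * deriv H z with hGdef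
    have hHd := diff_step F hFd
    have hGd := diff_step H hHd
    have hHs := hasSum_step (2*k) F hFs
    have hGs := hasSum_step (2*k+1) H hHs
    refine ⟨G, hGd, ?_, ?_⟩
    · intro z hz
      have hexp : 2*(k+1) = 2*k+1+1 := by ring
      rw [hexp]
      exact hGs z hz
    · have hFsym : ∀ z : ℂ, z ≠ 0 → z ≠ 1 → z ≠ -1 → F z⁻¹ = (-1:ℂ) * F z := by
        intro z h0 h1 h2
        linear_combination hFe z h0 h1 h2
      have hHsym := sym_step F hFd (-1) hFsym
      have hHsym' : ∀ z : ℂ, z ≠ 0 → z ≠ 1 → z ≠ -1 → H z⁻¹ = (1:ℂ) * H z := by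
        intro z h0 h1 h2
        have := hHsym z h0 h1 h2
        rw [hHdef]
        simpa using this
      have hGsym := sym_step H hHd 1 hHsym'
      intro z h0 h1 h2
      have := hGsym z h0 h1 h2
      rw [hGdef]
      simp only
      linear_combination this

end

end OddSeriesExt

/-- For a polynomial `p`, the odd generating series
`f₋(z) = ∑_{m ≥ 0} p((2m+1)²) z^(2m+1)` converges for `‖z‖ < 1` and extends to a
holomorphic function `F₋` on `ℂ ∖ {1, −1}` satisfying
`F₋(z) + F₋(1/z) = 0` for all `z ∉ {0, 1, −1}`. -/
theorem odd_series_extension (p : Polynomial ℂ) :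
    ∃ F : ℂ → ℂ,
      DifferentiableOn ℂ F {z : ℂ | z ≠ 1 ∧ z ≠ -1} ∧
      (∀ z : ℂ, ‖z‖ < 1 →
        HasSum (fun m : ℕ =>
          p.eval (((2 * m + 1 : ℕ) : ℂ) ^ 2) * z ^ (2 * m + 1)) (F z)) ∧
      (∀ z : ℂ, z ≠ 0 → z ≠ 1 → z ≠ -1 → F z + F z⁻¹ = 0) := by
  choose Fk hd hs he using OddSeriesExt.key
  set n := p.natDegree + 1 with hn
  refine ⟨fun z => ∑ i ∈ Finset.range n, p.coeff i * Fk i z, ?_, ?_, ?_⟩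
  · apply DifferentiableOn.fun_sum
    intro i _
    exact (differentiableOn_const (p.coeff i)).mul (hd i)
  · intro z hz
    have hrw : ∀ m : ℕ, p.eval (((2 * m + 1 : ℕ) : ℂ) ^ 2) * z ^ (2 * m + 1)
        = ∑ i ∈ Finset.range n, p.coeff i * (((2*m+1:ℕ):ℂ)^(2*i) * z^(2*m+1)) := by
      intro m
      rw [Polynomial.eval_eq_sum_range, Finset.sum_mul]
      apply Finset.sum_congr rfl
      intro i _
      rw [← pow_mul, mul_comm 2 i, pow_mul, ← pow_mul, mul_comm i 2]
      ring
    simp only [hrw]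
    exact hasSum_sum (fun i _ => (hs i z hz).mul_left (p.coeff i))
  · intro z h0 h1 h2
    rw [← Finset.sum_add_distrib]
    apply Finset.sum_eq_zero
    intro i _
    linear_combination (p.coeff i) * he i z h0 h1 h2
end

section
/- Let n ≥ 1 and 1 ≤ k ≤ n−1 be integers, and let P ∈ ℚ[x₁,…,xₙ] be a polynomial of total degree at most n−3 that is symmetric under all permutations of the variables x₁,…,x_k and symmetric under all permutations of the variables x_{k+1},…,xₙ. Suppose that P(a₁,…,aₙ) = 0 for all rational points with a₁ = 1, and that P(a₁,…,aₙ) = 0 for all rational points with aₙ = 4. Then P = 0. -/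
open MvPolynomial

private lemma subst_dvd {n : ℕ} (i : Fin n) (v : ℚ) (p : MvPolynomial (Fin n) ℚ) :
    (X i - C v) ∣ p - MvPolynomial.bind₁ (Function.update MvPolynomial.X i (C v)) p := by
  induction p using MvPolynomial.induction_on with
  | C a => simp
  | add p q hp hq =>
    have h : p + q - bind₁ (Function.update X i (C v)) (p + q)
        = (p - bind₁ (Function.update X i (C v)) p)
          + (q - bind₁ (Function.update X i (C v)) q) := by
      rw [map_add]; ring
    rw [h]; exact dvd_add hp hq
  | mul_X p j hp =>
    have h : p * X j - bind₁ (Function.update X i (C v)) (p * X j)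
        = (p - bind₁ (Function.update X i (C v)) p) * X j
          + bind₁ (Function.update X i (C v)) p
            * (X j - bind₁ (Function.update X i (C v)) (X j)) := by
      rw [map_mul]; ring
    rw [h]
    refine dvd_add (Dvd.dvd.mul_right hp _) (Dvd.dvd.mul_left ?_ _)
    rw [bind₁_X_right]
    rcases eq_or_ne j i with rfl | hne
    · rw [Function.update_self]
    · rw [Function.update_of_ne hne]; simp

private lemma eval_subst {n : ℕ} (i : Fin n) (v : ℚ) (p : MvPolynomial (Fin n) ℚ)
    (a : Fin n → ℚ) :
    eval a (MvPolynomial.bind₁ (Function.update MvPolynomial.X i (C v)) p)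
      = eval (Function.update a i v) p := by
  show eval₂Hom (RingHom.id ℚ) a _ = _
  rw [eval₂Hom_bind₁]
  show eval _ p = _
  congr 1
  congr 1
  funext j

  rcases eq_or_ne j i with rfl | hne
  · simp
  · simp [Function.update_of_ne hne]

/-- a nonzero polynomial has a nonvanishing point -/
private lemma exists_eval_ne {n : ℕ} {p : MvPolynomial (Fin n) ℚ} (hp : p ≠ 0) :
    ∃ a : Fin n → ℚ, eval a p ≠ 0 := by
  by_contra h
  push_neg at h
  exact hp (MvPolynomial.funext (fun a => by simpa using h a))

private lemma natDegree_subst_le {n : ℕ} (w : Fin n → ℚ) (p : MvPolynomial (Fin n) ℚ) :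
    (MvPolynomial.eval₂ (Polynomial.C : ℚ →+* Polynomial ℚ)
      (fun i => Polynomial.C (w i) * Polynomial.X) p).natDegree ≤ p.totalDegree := by
  rw [MvPolynomial.eval₂_eq]
  apply Polynomial.natDegree_sum_le_of_forall_le
  intro d hd
  refine (Polynomial.natDegree_mul_le).trans ?_
  simp only [Polynomial.natDegree_C, zero_add]
  refine (Polynomial.natDegree_prod_le _ _).trans ?_
  have h1 : ∀ j ∈ d.support,
      ((Polynomial.C (w j) * Polynomial.X) ^ d j).natDegree ≤ d j := by
    intro j _
    refine (Polynomial.natDegree_pow_le).trans ?_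
    have : (Polynomial.C (w j) * Polynomial.X).natDegree ≤ 1 := by
      refine (Polynomial.natDegree_mul_le).trans ?_
      simp
    calc d j * (Polynomial.C (w j) * Polynomial.X).natDegree ≤ d j * 1 :=
          Nat.mul_le_mul_left _ this
      _ = d j := mul_one _
  refine le_trans (Finset.sum_le_sum h1) ?_
  exact MvPolynomial.le_totalDegree hd


/-- A polynomial `P ∈ ℚ[x₁,…,xₙ]` of total degree at most `n − 3` that is
symmetric in the first `k` variables and in the last `n − k` variables, and
vanishes on the hyperplanes `x₁ = 1` and `xₙ = 4`, is identically zero. -/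
theorem block_symmetric_vanishing (n k : ℕ) (hn : 1 ≤ n) (hk1 : 1 ≤ k) (hk2 : k ≤ n - 1)
    (P : MvPolynomial (Fin n) ℚ)
    (hdeg : (P.totalDegree : ℤ) ≤ (n : ℤ) - 3)
    (hsym1 : ∀ σ : Equiv.Perm (Fin n), (∀ i : Fin n, k ≤ (i : ℕ) → σ i = i) →
      MvPolynomial.rename σ P = P)
    (hsym2 : ∀ σ : Equiv.Perm (Fin n), (∀ i : Fin n, (i : ℕ) < k → σ i = i) →
      MvPolynomial.rename σ P = P)
    (hvan1 : ∀ a : Fin n → ℚ, a ⟨0, by omega⟩ = 1 → MvPolynomial.eval a P = 0)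
    (hvan2 : ∀ a : Fin n → ℚ, a ⟨n - 1, by omega⟩ = 4 → MvPolynomial.eval a P = 0) :
    P = 0 := by
  set c : Fin n → ℚ := fun i => if (i : ℕ) < k then 1 else 4 with hc
  -- Step A: P vanishes on each hyperplane x_i = c i
  have hvan : ∀ (i : Fin n) (a : Fin n → ℚ), a i = c i → MvPolynomial.eval a P = 0 := by
    intro i a hai
    rcases lt_or_ge (i : ℕ) k with hik | hik
    · set z : Fin n := ⟨0, by omega⟩ with hz
      set σ : Equiv.Perm (Fin n) := Equiv.swap i z with hσ
      have hfix : ∀ j : Fin n, k ≤ (j : ℕ) → σ j = j := by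
        intro j hj
        apply Equiv.swap_apply_of_ne_of_ne
        · intro h; rw [h] at hj; omega
        · intro h; rw [h] at hj; simp [hz] at hj; omega
      have h1 : (a ∘ σ) z = 1 := by
        simp only [Function.comp_apply, hσ, Equiv.swap_apply_right]
        rw [hai, hc]; simp [hik]
      calc MvPolynomial.eval a P = MvPolynomial.eval a (MvPolynomial.rename σ P) := by
            rw [hsym1 σ hfix]
        _ = MvPolynomial.eval (a ∘ σ) P := by rw [MvPolynomial.eval_rename]
        _ = 0 := hvan1 _ h1
    · set z : Fin n := ⟨n - 1, by omega⟩ with hz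
      set σ : Equiv.Perm (Fin n) := Equiv.swap i z with hσ
      have hfix : ∀ j : Fin n, (j : ℕ) < k → σ j = j := by
        intro j hj
        apply Equiv.swap_apply_of_ne_of_ne
        · intro h; rw [h] at hj; omega
        · intro h; rw [h] at hj; simp [hz] at hj; omega
      have h1 : (a ∘ σ) z = 4 := by
        simp only [Function.comp_apply, hσ, Equiv.swap_apply_right]
        rw [hai, hc]; simp; omega
      calc MvPolynomial.eval a P = MvPolynomial.eval a (MvPolynomial.rename σ P) := by
            rw [hsym2 σ hfix]
        _ = MvPolynomial.eval (a ∘ σ) P := by rw [MvPolynomial.eval_rename]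
        _ = 0 := hvan2 _ h1
  -- factors are nonzero
  have hfac : ∀ j : Fin n, (X j - C (c j) : MvPolynomial (Fin n) ℚ) ≠ 0 := by
    intro j h
    have := congrArg (MvPolynomial.eval (fun _ => c j + 1)) h
    simp at this
  -- Step B: divisibility
  have hdvd : ∀ s : Finset (Fin n),
      (∏ j ∈ s, (X j - C (c j))) ∣ P := by
    intro s
    induction s using Finset.induction_on with
    | empty => simp
    | @insert i s his ih =>
      obtain ⟨Q, hQ⟩ := ih
      have hφ : MvPolynomial.bind₁ (Function.update MvPolynomial.X i (C (c i))) Q = 0 := by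
        have hz : (∏ j ∈ s, (X j - C (c j)))
            * MvPolynomial.bind₁ (Function.update MvPolynomial.X i (C (c i))) Q = 0 := by
          apply MvPolynomial.funext
          intro a
          rw [map_mul, map_zero]
          by_cases hall : ∀ j ∈ s, a j ≠ c j
          · have heval : MvPolynomial.eval (Function.update a i (c i)) Q = 0 := by
              have hP0 : MvPolynomial.eval (Function.update a i (c i)) P = 0 :=
                hvan i _ (Function.update_self _ _ _)
              rw [hQ, map_mul] at hP0
              have hprod : MvPolynomial.eval (Function.update a i (c i))
                  (∏ j ∈ s, (X j - C (c j))) ≠ 0 := by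
                rw [map_prod]
                rw [Finset.prod_ne_zero_iff]
                intro j hj
                have hji : j ≠ i := fun h => his (h ▸ hj)
                simp only [MvPolynomial.eval_sub, MvPolynomial.eval_X, MvPolynomial.eval_C,
                  Function.update_of_ne hji]
                exact sub_ne_zero_of_ne (hall j hj)
              exact (mul_eq_zero.mp hP0).resolve_left hprod
            rw [eval_subst, heval, mul_zero]
          · push_neg at hall
            obtain ⟨j, hjs, hj⟩ := hall
            have : MvPolynomial.eval a (∏ j ∈ s, (X j - C (c j))) = 0 := by
              rw [map_prod]
              apply Finset.prod_eq_zero hjs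
              simp [hj]
            rw [this, zero_mul]
        rcases mul_eq_zero.mp hz with h | h
        · exact absurd h (Finset.prod_ne_zero_iff.mpr (fun j _ => hfac j))
        · exact h
      have hdiv : (X i - C (c i)) ∣ Q := by
        have := subst_dvd i (c i) Q
        rwa [hφ, sub_zero] at this
      obtain ⟨R, hR⟩ := hdiv
      exact ⟨R, by rw [Finset.prod_insert his, hQ, hR]; ring⟩
  -- Step C: degree contradiction
  by_contra hP0
  obtain ⟨Q, hPQ⟩ := hdvd Finset.univ
  have hQ0 : Q ≠ 0 := by rintro rfl; rw [mul_zero] at hPQ; exact hP0 hPQ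
  have hXQ : (∏ i : Fin n, (X i : MvPolynomial (Fin n) ℚ)) * Q ≠ 0 :=
    mul_ne_zero (Finset.prod_ne_zero_iff.mpr (fun i _ => MvPolynomial.X_ne_zero i)) hQ0
  obtain ⟨w, hw⟩ := exists_eval_ne hXQ
  rw [map_mul] at hw
  have hwQ : MvPolynomial.eval w Q ≠ 0 := right_ne_zero_of_mul hw
  have hwi : ∀ i : Fin n, w i ≠ 0 := by
    intro i
    have h := left_ne_zero_of_mul hw
    rw [map_prod] at h
    simp only [MvPolynomial.eval_X] at h
    exact Finset.prod_ne_zero_iff.mp h i (Finset.mem_univ i)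
  set ψ : MvPolynomial (Fin n) ℚ →+* Polynomial ℚ :=
    MvPolynomial.eval₂Hom (Polynomial.C : ℚ →+* Polynomial ℚ)
      (fun i => Polynomial.C (w i) * Polynomial.X) with hψ
  have hψQ : ψ Q ≠ 0 := by
    intro h
    apply hwQ
    have := congrArg (Polynomial.evalRingHom (1 : ℚ)) h
    rw [map_zero] at this
    rw [← this]
    show MvPolynomial.eval w Q = Polynomial.eval 1 (MvPolynomial.eval₂ _ _ Q)
    rw [show Polynomial.eval (1:ℚ) (MvPolynomial.eval₂ Polynomial.C
        (fun i => Polynomial.C (w i) * Polynomial.X) Q)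
      = (Polynomial.evalRingHom (1:ℚ)) (MvPolynomial.eval₂ Polynomial.C
        (fun i => Polynomial.C (w i) * Polynomial.X) Q) from rfl]
    rw [MvPolynomial.eval₂_comp_left]
    have h1 : (Polynomial.evalRingHom (1:ℚ)).comp Polynomial.C = RingHom.id ℚ := by
      ext a
      simp [Polynomial.coe_evalRingHom]
    rw [h1]
    show MvPolynomial.eval₂ (RingHom.id ℚ) w Q = _
    congr 1
    funext i
    simp [Polynomial.coe_evalRingHom]
  have hψD : (ψ (∏ j : Fin n, (X j - C (c j)))).natDegree = n := by
    rw [map_prod]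
    rw [Polynomial.natDegree_prod]
    · have : ∀ j : Fin n, (ψ (X j - C (c j))).natDegree = 1 := by
        intro j
        rw [map_sub]
        simp only [hψ, MvPolynomial.eval₂Hom_X', MvPolynomial.eval₂Hom_C]
        rw [show Polynomial.C (w j) * Polynomial.X - Polynomial.C (c j)
          = Polynomial.C (w j) * Polynomial.X + Polynomial.C (-(c j)) by rw [map_neg]; ring]
        exact Polynomial.natDegree_linear (hwi j)
      simp only [this]
      simp
    · intro j _
      intro h
      have h2 : (ψ (X j - C (c j))).natDegree = 1 := by
        rw [map_sub]
        simp only [hψ, MvPolynomial.eval₂Hom_X', MvPolynomial.eval₂Hom_C]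
        rw [show Polynomial.C (w j) * Polynomial.X - Polynomial.C (c j)
          = Polynomial.C (w j) * Polynomial.X + Polynomial.C (-(c j)) by rw [map_neg]; ring]
        exact Polynomial.natDegree_linear (hwi j)
      rw [h] at h2
      simp at h2
  have hψD0 : ψ (∏ j : Fin n, (X j - C (c j))) ≠ 0 := by
    rw [map_prod]
    apply Finset.prod_ne_zero_iff.mpr
    intro j _
    intro h
    have h2 : (ψ (X j - C (c j))).natDegree = 1 := by
      rw [map_sub]
      simp only [hψ, MvPolynomial.eval₂Hom_X', MvPolynomial.eval₂Hom_C]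
      rw [show Polynomial.C (w j) * Polynomial.X - Polynomial.C (c j)
        = Polynomial.C (w j) * Polynomial.X + Polynomial.C (-(c j)) by rw [map_neg]; ring]
      exact Polynomial.natDegree_linear (hwi j)
    rw [h] at h2
    simp at h2
  have hlow : n ≤ (ψ P).natDegree := by
    rw [hPQ, map_mul, Polynomial.natDegree_mul hψD0 hψQ, hψD]
    omega
  have hup : (ψ P).natDegree ≤ P.totalDegree := by
    have := natDegree_subst_le w P
    simpa [hψ, MvPolynomial.coe_eval₂Hom] using this
  omega
end
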